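/- Let R be a commutative ring, I and J ideals of R, and M and N R-modules. If M is (I,J)-coprime, then the R-module Hom_R(M,N) is (I,J)-prime. Conversely, if N is an injective R-module which is a cogenerator (for every R-module X and every nonzero x ∈ X there exists g : X → N R-linear with g(x) ≠ 0) and Hom_R(M,N) is (I,J)-prime, then M is (I,J)-coprime. -/

import Mathlib

/-- An `R`-module `P` is `(I,J)`-prime if for all `p ∈ P`, `(I*J) • p = 0` implies
that either `I • p = 0` or `J • p = 0`. -/
def IsIJPrime {R : Type*} [CommRing R] (I J : Ideal R) (P : Type*) [AddCommGroup P]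
    [Module R P] : Prop :=
  ∀ p : P, (∀ a ∈ I * J, a • p = 0) → (∀ a ∈ I, a • p = 0) ∨ (∀ a ∈ J, a • p = 0)

/-- An `R`-module `M` is `(I,J)`-coprime if either `(I*J) • M = I • M` or `(I*J) • M = J • M`. -/
def IsIJCoprime {R : Type*} [CommRing R] (I J : Ideal R) (M : Type*) [AddCommGroup M]
    [Module R M] : Prop :=
  (I * J) • (⊤ : Submodule R M) = I • (⊤ : Submodule R M) ∨
    (I * J) • (⊤ : Submodule R M) = J • (⊤ : Submodule R M)

/-!
Write `K := (I*J) • M`. A map `f : M → N` is killed by an ideal `S` iff `S • M ⊆ ker f`, so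
coprimality of `M` makes the two conditions "killed by `I*J`" and "killed by `I` (or `J`)" coincide.
Conversely, if `K` is strictly smaller than both `I • M` and `J • M`, the cogenerator `N` separates
an element of `I • M` and an element of `J • M` from `K`; one of the two separating maps or their
sum then kills `K` but neither `I • M` nor `J • M`, so `Hom_R(M,N)` is not `(I,J)`-prime.
-/

open Submodule LinearMap

section

variable {R M N : Type*}

lemma LinearMap.exists_le_ker_not_le_ker_of_not_le_ker [Semiring R] [AddCommMonoid M]
    [Module R M] [AddCommMonoid N] [Module R N] {K A B : Submodule R M} {f g : M →ₗ[R] N}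
    (hfK : K ≤ ker f) (hgK : K ≤ ker g) (hfA : ¬A ≤ ker f) (hgB : ¬B ≤ ker g) :
    ∃ h : M →ₗ[R] N, K ≤ ker h ∧ ¬A ≤ ker h ∧ ¬B ≤ ker h := by
  by_cases hfB : B ≤ ker f
  · by_cases hgA : A ≤ ker g
    · refine ⟨f + g, fun x hx => ?_, fun hle => hfA fun x hx => ?_, fun hle => hgB fun x hx => ?_⟩
      · simp [mem_ker.mp (hfK hx), mem_ker.mp (hgK hx)]
      · simpa [mem_ker.mp (hgA hx)] using hle hx
      · simpa [mem_ker.mp (hfB hx)] using hle hx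
    · exact ⟨g, hgK, hgA, hgB⟩
  · exact ⟨f, hfK, hfA, hfB⟩

lemma exists_le_ker_not_le_ker_of_separating [Ring R] [AddCommGroup M] [Module R M]
    [AddCommGroup N] [Module R N] {K A : Submodule R M}
    (hsep : ∀ x : M ⧸ K, x ≠ 0 → ∃ g : (M ⧸ K) →ₗ[R] N, g x ≠ 0) (hA : ¬A ≤ K) :
    ∃ f : M →ₗ[R] N, K ≤ ker f ∧ ¬A ≤ ker f := by
  obtain ⟨x, hxA, hxK⟩ := SetLike.not_le_iff_exists.mp hA
  obtain ⟨g, hg⟩ := hsep (K.mkQ x) (by simpa [Submodule.Quotient.mk_eq_zero] using hxK)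
  refine ⟨g ∘ₗ K.mkQ, ?_, fun hle => hg (hle hxA)⟩
  simpa only [ker_mkQ] using ker_le_ker_comp K.mkQ g

variable [CommRing R] [AddCommGroup M] [Module R M] [AddCommGroup N] [Module R N]

lemma smul_eq_zero_iff_smul_top_le_ker (S : Ideal R) (f : M →ₗ[R] N) :
    (∀ a ∈ S, a • f = 0) ↔ S • (⊤ : Submodule R M) ≤ ker f := by
  refine ⟨fun h x hx => ?_, fun h a ha => ext fun m => by
    simpa using h (smul_mem_smul ha (mem_top (x := m)))⟩
  refine smul_induction_on hx (fun r hr m _ => ?_) (fun _ _ => add_mem)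
  simpa using congrArg (· m) (h r hr)

lemma isIJPrime_hom_of_isIJCoprime {I J : Ideal R} (h : IsIJCoprime I J M) :
    IsIJPrime I J (M →ₗ[R] N) := by
  intro f hf
  simp only [smul_eq_zero_iff_smul_top_le_ker] at hf ⊢
  rcases h with h | h
  · exact Or.inl (h ▸ hf)
  · exact Or.inr (h ▸ hf)

lemma isIJCoprime_of_isIJPrime_hom {I J : Ideal R}
    (hsep : ∀ x : M ⧸ (I * J) • (⊤ : Submodule R M), x ≠ 0 →
      ∃ g : (M ⧸ (I * J) • (⊤ : Submodule R M)) →ₗ[R] N, g x ≠ 0)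
    (h : IsIJPrime I J (M →ₗ[R] N)) : IsIJCoprime I J M := by
  by_contra hco
  obtain ⟨hneI, hneJ⟩ := not_or.mp hco
  set K := (I * J) • (⊤ : Submodule R M)
  have hI : ¬I • ⊤ ≤ K := fun hle => hneI (le_antisymm (smul_mono_left Ideal.mul_le_left) hle)
  have hJ : ¬J • ⊤ ≤ K := fun hle => hneJ (le_antisymm (smul_mono_left Ideal.mul_le_right) hle)
  obtain ⟨f₁, hf₁K, hf₁I⟩ := exists_le_ker_not_le_ker_of_separating hsep hI
  obtain ⟨f₂, hf₂K, hf₂J⟩ := exists_le_ker_not_le_ker_of_separating hsep hJ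
  obtain ⟨f, hfK, hfI, hfJ⟩ := exists_le_ker_not_le_ker_of_not_le_ker hf₁K hf₂K hf₁I hf₂J
  simp only [IsIJPrime, smul_eq_zero_iff_smul_top_le_ker] at h
  exact (h f hfK).elim hfI hfJ

end

/-- If `M` is `(I,J)`-coprime then `Hom_R(M,N)` is `(I,J)`-prime; the converse holds when
`N` is an injective cogenerator. -/
theorem stmt_17 {R : Type u} [CommRing R] (I J : Ideal R) (M : Type v) (N : Type w)
    [AddCommGroup M] [Module R M] [AddCommGroup N] [Module R N] :
    (IsIJCoprime I J M → IsIJPrime I J (M →ₗ[R] N)) ∧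
    (Module.Injective R N →
      (∀ (X : Type v) [AddCommGroup X] [Module R X] (x : X), x ≠ 0 →
        ∃ g : X →ₗ[R] N, g x ≠ 0) →
      IsIJPrime I J (M →ₗ[R] N) → IsIJCoprime I J M) :=
  ⟨isIJPrime_hom_of_isIJCoprime, fun _ hcog => isIJCoprime_of_isIJPrime_hom (hcog _)⟩
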